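/- Transfer function invariance under output shifting: let E, A ∈ ℝ^{n×n}, B ∈ ℝ^{n×m}, C ∈ ℝ^{m×n}, D ∈ ℝ^{m×m}, and W ∈ ℝ^{n×m} with E^T W = 0. Then for every s ∈ ℂ such that sE − A is invertible (matrices viewed as complex), (C − W^T A)(sE − A)^{-1}B + (D − W^T B) = C(sE − A)^{-1}B + D. -/

import Mathlib

/-! Since `Wᵀ E = 0`, we have `Wᵀ A = -Wᵀ (sE - A)`, hence `Wᵀ A (sE - A)⁻¹ B = -Wᵀ B`:
the change of the feedthrough term cancels the change of the output matrix. -/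

open Matrix
open scoped ComplexOrder

/-- View a real matrix as a complex matrix. -/
noncomputable def toC {k l : Type*} (M : Matrix k l ℝ) : Matrix k l ℂ :=
  M.map (fun x => (x : ℂ))

/-- The matrix pencil `s E - A`, viewed over `ℂ`. -/
noncomputable def pencil {n : ℕ} (E A : Matrix (Fin n) (Fin n) ℝ) (s : ℂ) :
    Matrix (Fin n) (Fin n) ℂ :=
  s • toC E - toC A

/-- The transfer function `T(s) = C (sE - A)⁻¹ B + D` of the descriptor system. -/
noncomputable def transfer {n m : ℕ} (E A : Matrix (Fin n) (Fin n) ℝ)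
    (B : Matrix (Fin n) (Fin m) ℝ) (C : Matrix (Fin m) (Fin n) ℝ)
    (D : Matrix (Fin m) (Fin m) ℝ) (s : ℂ) : Matrix (Fin m) (Fin m) ℂ :=
  toC C * (pencil E A s)⁻¹ * toC B + toC D

/-- A descriptor system is positive real if the pencil is invertible on the open right
half-plane and `T(s) + T(s)ᴴ` is positive semidefinite there. -/
def PositiveReal {n m : ℕ} (E A : Matrix (Fin n) (Fin n) ℝ)
    (B : Matrix (Fin n) (Fin m) ℝ) (C : Matrix (Fin m) (Fin n) ℝ)
    (D : Matrix (Fin m) (Fin m) ℝ) : Prop :=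
  ∀ s : ℂ, 0 < s.re → (pencil E A s).det ≠ 0 ∧
    (transfer E A B C D s + (transfer E A B C D s)ᴴ).PosSemidef

/-- Complete controllability: `[αE - βA, B]` has full row rank for all `(α,β) ≠ (0,0)`. -/
def CompletelyControllable {n m : ℕ} (E A : Matrix (Fin n) (Fin n) ℝ)
    (B : Matrix (Fin n) (Fin m) ℝ) : Prop :=
  ∀ α β : ℂ, ¬(α = 0 ∧ β = 0) →
    (fromCols (α • toC E - β • toC A) (toC B)).rank = n

/-- Complete observability: `[αE - βA; C]` has full column rank for all `(α,β) ≠ (0,0)`. -/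
def CompletelyObservable {n m : ℕ} (E A : Matrix (Fin n) (Fin n) ℝ)
    (C : Matrix (Fin m) (Fin n) ℝ) : Prop :=
  ∀ α β : ℂ, ¬(α = 0 ∧ β = 0) →
    (fromRows (α • toC E - β • toC A) (toC C)).rank = n

/-- A descriptor system `(E,A,B,C,D)` is port-Hamiltonian if it admits a pH decomposition. -/
def IsPortHamiltonian {n m : ℕ} (E A : Matrix (Fin n) (Fin n) ℝ)
    (B : Matrix (Fin n) (Fin m) ℝ) (C : Matrix (Fin m) (Fin n) ℝ)
    (D : Matrix (Fin m) (Fin m) ℝ) : Prop :=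
  ∃ (J R Q : Matrix (Fin n) (Fin n) ℝ) (G P : Matrix (Fin n) (Fin m) ℝ),
    A = (J - R) * Q ∧ B = G - P ∧ C = (G + P)ᵀ * Q ∧ Jᵀ = -J ∧
    (Eᵀ * Q).PosSemidef ∧
    (fromBlocks (Qᵀ * R * Q) (Qᵀ * P) (Pᵀ * Q) ((1/2 : ℝ) • (D + Dᵀ))).PosSemidef

/-- The KYP block matrix `[[AᵀQ + QᵀA, QᵀB - Cᵀ], [BᵀQ - C, -D - Dᵀ]]`. -/
def KYPmatrix {n m : ℕ} (A : Matrix (Fin n) (Fin n) ℝ)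
    (B : Matrix (Fin n) (Fin m) ℝ) (C : Matrix (Fin m) (Fin n) ℝ)
    (D : Matrix (Fin m) (Fin m) ℝ) (Q : Matrix (Fin n) (Fin n) ℝ) :
    Matrix (Fin n ⊕ Fin m) (Fin n ⊕ Fin m) ℝ :=
  fromBlocks (Aᵀ * Q + Qᵀ * A) (Qᵀ * B - Cᵀ) (Bᵀ * Q - C) (-D - Dᵀ)

section ComplexCast

variable {k l p : Type*}

theorem toC_mul [Fintype l] (M : Matrix k l ℝ) (N : Matrix l p ℝ) :
    toC (M * N) = toC M * toC N :=
  Matrix.map_mul (f := Complex.ofRealHom)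

theorem toC_sub (M N : Matrix k l ℝ) : toC (M - N) = toC M - toC N :=
  Matrix.map_sub _ Complex.ofReal_sub M N

theorem toC_zero : toC (0 : Matrix k l ℝ) = 0 :=
  Matrix.map_zero _ Complex.ofReal_zero

end ComplexCast

section OutputShift

variable {k l n R : Type*} [Fintype n] [DecidableEq n] [CommRing R]
  {X : Matrix k n R} {E A : Matrix n n R} {s : R}

theorem mul_mul_inv_smul_sub_eq_neg (hXE : X * E = 0) (hP : IsUnit (s • E - A)) :
    X * A * (s • E - A)⁻¹ = -X := by
  have hXA : X * A = -(X * (s • E - A)) := by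
    rw [Matrix.mul_sub, Matrix.mul_smul, hXE, smul_zero, zero_sub, neg_neg]
  rw [hXA, Matrix.neg_mul, Matrix.mul_assoc,
    Matrix.mul_nonsing_inv _ ((isUnit_iff_isUnit_det _).mp hP), Matrix.mul_one]

theorem sub_mul_inv_smul_sub_mul_add_sub (hXE : X * E = 0) (hP : IsUnit (s • E - A))
    (C : Matrix k n R) (B : Matrix n l R) (D : Matrix k l R) :
    (C - X * A) * (s • E - A)⁻¹ * B + (D - X * B) = C * (s • E - A)⁻¹ * B + D := by
  rw [Matrix.sub_mul, Matrix.sub_mul, mul_mul_inv_smul_sub_eq_neg hXE hP, Matrix.neg_mul]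
  abel

end OutputShift

/-- Transfer function invariance under output shifting with `EᵀW = 0`. -/
theorem transfer_invariance_output_shift {n m : ℕ}
    (E A : Matrix (Fin n) (Fin n) ℝ) (B : Matrix (Fin n) (Fin m) ℝ)
    (C : Matrix (Fin m) (Fin n) ℝ) (D : Matrix (Fin m) (Fin m) ℝ)
    (W : Matrix (Fin n) (Fin m) ℝ) (hW : Eᵀ * W = 0) :
    ∀ s : ℂ, IsUnit (s • toC E - toC A) →
      toC (C - Wᵀ * A) * (s • toC E - toC A)⁻¹ * toC B + toC (D - Wᵀ * B)
        = toC C * (s • toC E - toC A)⁻¹ * toC B + toC D := by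
  intro s hs
  have hWE : toC Wᵀ * toC E = 0 := by
    rw [← toC_mul, ← transpose_transpose E, ← transpose_mul, hW, transpose_zero, toC_zero]
  rw [toC_sub, toC_sub, toC_mul, toC_mul]
  exact sub_mul_inv_smul_sub_mul_add_sub hWE hs _ _ _
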